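/- Let Δ and K be m×m real positive definite matrices with Δ ⪯ K, Q a real matrix with QᵀQ = Δ, and λ < 0. Then det(λI − (I − Q K⁻¹ Qᵀ)) = det((λ−1)K + Δ)/det(K), and this determinant is nonzero since (λ−1)K + Δ is negative definite. -/

import Mathlib

/-!
Writing `λ • 1 - (1 - Q K⁻¹ Qᵀ) = (λ - 1) • 1 + Q (K⁻¹ Qᵀ)` and using that `AB` and `BA` have the
same characteristic polynomial, the determinant becomes `det ((λ - 1) • 1 + K⁻¹ Qᵀ Q)`, i.e.
`det ((λ - 1) • K + Δ) / det K`. Nonvanishing comes from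
`-((λ - 1) • K + Δ) = (K - Δ) + (-λ) • K`, positive semidefinite plus positive definite.
-/

open Matrix

namespace Matrix

section Determinant

variable {n R : Type*} [Fintype n] [DecidableEq n] [CommRing R]

theorem det_smul_one_add_mul_comm (A B : Matrix n n R) (c : R) :
    det (c • 1 + A * B) = det (c • 1 + B * A) := by
  have h := congrArg (Polynomial.eval (-c)) (charpoly_mul_comm A B)
  have hscalar (M : Matrix n n R) : scalar n (-c) - M = -(c • 1 + M) := by
    rw [scalar_apply, ← smul_one_eq_diagonal, neg_smul]; abel
  rw [eval_charpoly, eval_charpoly, hscalar, hscalar, det_neg, det_neg] at h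
  have hsq : ((-1 : R) ^ Fintype.card n) * (-1) ^ Fintype.card n = 1 := by
    rw [← mul_pow, neg_one_mul, neg_neg, one_pow]
  simpa [← mul_assoc, hsq] using congrArg ((-1 : R) ^ Fintype.card n * ·) h

theorem det_mul_det_smul_one_add_mul_inv_mul {K : Matrix n n R}
    (hK : IsUnit K.det) (A B : Matrix n n R) (c : R) :
    K.det * det (c • 1 + A * K⁻¹ * B) = det (c • K + B * A) := by
  rw [Matrix.mul_assoc, det_smul_one_add_mul_comm, ← det_mul, Matrix.mul_add, mul_smul_comm,
    Matrix.mul_one, ← Matrix.mul_assoc, ← Matrix.mul_assoc, mul_nonsing_inv K hK, Matrix.one_mul]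

end Determinant

theorem PosDef.neg_sub_one_smul_add_of_posSemidef_sub {n R : Type*} [CommRing R]
    [PartialOrder R] [StarRing R] [StarOrderedRing R] [PosSMulStrictMono R R]
    {K Δ : Matrix n n R} (hK : K.PosDef) (hle : (K - Δ).PosSemidef) {lam : R} (hlam : lam < 0) :
    (-((lam - 1) • K + Δ)).PosDef := by
  have hsplit : -((lam - 1) • K + Δ) = (K - Δ) + (-lam) • K := by
    rw [sub_smul, one_smul, neg_smul]; abel
  rw [hsplit]
  exact PosDef.posSemidef_add hle (hK.smul (neg_pos.mpr hlam))

end Matrix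

theorem det_char_poly_eval_neg_general
    {m : ℕ} (Δ K Q : Matrix (Fin m) (Fin m) ℝ)
    (hK : K.PosDef) (hle : (K - Δ).PosSemidef)
    (hQ : Qᵀ * Q = Δ) (lam : ℝ) (hlam : lam < 0) :
    Matrix.det (lam • (1 : Matrix (Fin m) (Fin m) ℝ) - (1 - Q * K⁻¹ * Qᵀ))
      = Matrix.det ((lam - 1) • K + Δ) / Matrix.det K ∧
    Matrix.det (lam • (1 : Matrix (Fin m) (Fin m) ℝ) - (1 - Q * K⁻¹ * Qᵀ)) ≠ 0 ∧
    (-((lam - 1) • K + Δ)).PosDef := by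
  have hKdet : K.det ≠ 0 := hK.det_pos.ne'
  have hneg := hK.neg_sub_one_smul_add_of_posSemidef_sub hle hlam
  have hdet : Matrix.det (lam • (1 : Matrix (Fin m) (Fin m) ℝ) - (1 - Q * K⁻¹ * Qᵀ))
      = Matrix.det ((lam - 1) • K + Δ) / Matrix.det K := by
    rw [eq_div_iff hKdet, mul_comm, ← hQ,
      ← det_mul_det_smul_one_add_mul_inv_mul (isUnit_iff_ne_zero.mpr hKdet), sub_smul, one_smul]
    congr 2
    abel
  have hdet_ne : Matrix.det ((lam - 1) • K + Δ) ≠ 0 := by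
    have hpos := hneg.det_pos
    rw [det_neg] at hpos
    exact right_ne_zero_of_mul hpos.ne'
  exact ⟨hdet, hdet ▸ div_ne_zero hdet_ne hKdet, hneg⟩

theorem det_char_poly_eval_neg
    {m : ℕ} (Δ K Q : Matrix (Fin m) (Fin m) ℝ)
    (hΔ : Δ.PosDef) (hK : K.PosDef) (hle : (K - Δ).PosSemidef)
    (hQ : Qᵀ * Q = Δ) (lam : ℝ) (hlam : lam < 0) :
    Matrix.det (lam • (1 : Matrix (Fin m) (Fin m) ℝ) - (1 - Q * K⁻¹ * Qᵀ))
      = Matrix.det ((lam - 1) • K + Δ) / Matrix.det K ∧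
    Matrix.det (lam • (1 : Matrix (Fin m) (Fin m) ℝ) - (1 - Q * K⁻¹ * Qᵀ)) ≠ 0 ∧
    (-((lam - 1) • K + Δ)).PosDef :=
  det_char_poly_eval_neg_general Δ K Q hK hle hQ lam hlam
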